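/- arXiv:2206.01563 — 2 statements merged into one kernel-verified Lean document; each statement's English description precedes it below -/
import Mathlib

section
/- Let H be a class of functions from X to {-1,1} and let P' be a finite subset of X of size n. If the Rademacher complexity of H on P' is strictly less than μ/2, i.e., E_σ[(1/n) sup_{h∈H} |Σ_{x∈P'} h(x)σ(x)|] < μ/2 where σ(x) are i.i.d. uniform signs, then P' cannot be shattered by the class of functions sign(g) where g ranges over convex combinations of functions in H satisfying |g(x)| ≥ μ for at least n/2 of the points x ∈ P'. -/
open Finset

/-- If the Rademacher complexity of `H` on a finite set `P'` of size `n` is strictly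
less than `μ/2`, then `P'` cannot be shattered by the class of functions `sign (g)`
where `g` ranges over convex combinations of members of `H` with `|g x| ≥ μ` on at
least `n/2` of the points of `P'`. -/
theorem stmt_4 {X : Type*} [DecidableEq X] (H : Set (X → ℝ))
    (hH : ∀ h ∈ H, ∀ x, h x = 1 ∨ h x = -1)
    (P' : Finset X) (n : ℕ) (hn : n = P'.card) (hn1 : 1 ≤ n) (μ : ℝ) (hμ : 0 < μ)
    (hRad : (1 / (2 : ℝ) ^ n) *
        ∑ σ : {x // x ∈ P'} → Bool,
          (1 / (n : ℝ)) * sSup {r : ℝ | ∃ h ∈ H,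
            r = |∑ x : {x // x ∈ P'}, h x.1 * (if σ x then (1 : ℝ) else -1)|}
      < μ / 2) :
    ¬ (∀ σ : {x // x ∈ P'} → Bool,
        ∃ (k : ℕ) (α : Fin k → ℝ) (h : Fin k → X → ℝ),
          (∀ i, h i ∈ H) ∧ (∀ i, 0 ≤ α i) ∧ (∑ i, α i = 1) ∧
          ((n : ℝ) / 2 ≤
            ((P'.attach.filter (fun x => μ ≤ |∑ i, α i * h i x.1|)).card : ℝ)) ∧
          (∀ x : {x // x ∈ P'},
            Real.sign (∑ i, α i * h i x.1) = (if σ x then (1 : ℝ) else -1))) := by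
  intro hshat
  have hNpos : (0:ℝ) < (n:ℝ) := by exact_mod_cast hn1
  have key : ∀ σ : {x // x ∈ P'} → Bool,
      μ / 2 ≤ (1 / (n : ℝ)) * sSup {r : ℝ | ∃ h ∈ H,
        r = |∑ x : {x // x ∈ P'}, h x.1 * (if σ x then (1 : ℝ) else -1)|} := by
    intro σ
    obtain ⟨k, α, h, hhH, hα0, hα1, hcard, hsign⟩ := hshat σ
    set v : {x // x ∈ P'} → ℝ := fun x => if σ x then (1:ℝ) else -1 with hv
    set g : X → ℝ := fun x => ∑ i, α i * h i x with hg
    have habs : ∀ x : {x // x ∈ P'}, g x.1 * v x = |g x.1| := by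
      intro x
      have hs := hsign x
      by_cases hb : σ x
      · have h1 : Real.sign (g x.1) = 1 := by simpa [hb] using hs
        have h2 : 0 < g x.1 := by
          rcases lt_trichotomy (g x.1) 0 with hlt | heq | hgt
          · rw [Real.sign_of_neg hlt] at h1; norm_num at h1
          · rw [heq, Real.sign_zero] at h1; norm_num at h1
          · exact hgt
        simp [v, hb, abs_of_pos h2]
      · have h1 : Real.sign (g x.1) = -1 := by simpa [hb] using hs
        have h2 : g x.1 < 0 := by
          rcases lt_trichotomy (g x.1) 0 with hlt | heq | hgt
          · exact hlt
          · rw [heq, Real.sign_zero] at h1; norm_num at h1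
          · rw [Real.sign_of_pos hgt] at h1; norm_num at h1
        rw [abs_of_neg h2]; simp [v, hb]
    have hsum1 : μ * ((n:ℝ)/2) ≤ ∑ x : {x // x ∈ P'}, g x.1 * v x := by
      have hμc : μ * ((n:ℝ)/2) ≤
          μ * ((P'.attach.filter (fun x => μ ≤ |g x.1|)).card : ℝ) :=
        mul_le_mul_of_nonneg_left hcard hμ.le
      have h2 : μ * ((P'.attach.filter (fun x => μ ≤ |g x.1|)).card : ℝ) ≤
          ∑ x ∈ P'.attach.filter (fun x => μ ≤ |g x.1|), |g x.1| := by
        rw [mul_comm, ← nsmul_eq_mul]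
        exact Finset.card_nsmul_le_sum _ _ _ (fun x hx => (Finset.mem_filter.mp hx).2)
      have h3 : ∑ x ∈ P'.attach.filter (fun x => μ ≤ |g x.1|), |g x.1| ≤
          ∑ x : {x // x ∈ P'}, |g x.1| := by
        rw [← Finset.univ_eq_attach] at *
        exact Finset.sum_le_sum_of_subset_of_nonneg (Finset.filter_subset _ _)
          (fun x _ _ => abs_nonneg _)
      have h4 : ∑ x : {x // x ∈ P'}, |g x.1| = ∑ x : {x // x ∈ P'}, g x.1 * v x := by
        exact Finset.sum_congr rfl (fun x _ => (habs x).symm)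
      linarith
    have hswap : ∑ x : {x // x ∈ P'}, g x.1 * v x
        = ∑ i, α i * ∑ x : {x // x ∈ P'}, h i x.1 * v x := by
      simp only [hg, Finset.sum_mul, Finset.mul_sum]
      rw [Finset.sum_comm]
      exact Finset.sum_congr rfl fun i _ => Finset.sum_congr rfl fun x _ => by ring
    have hex : ∃ i, μ * ((n:ℝ)/2) ≤ ∑ x : {x // x ∈ P'}, h i x.1 * v x := by
      by_contra hc
      push_neg at hc
      obtain ⟨j, hj⟩ : ∃ j, 0 < α j := by
        by_contra hcc
        push_neg at hcc
        have : ∀ i, α i = 0 := fun i => le_antisymm (hcc i) (hα0 i)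
        simp [this] at hα1
      have hlt : ∑ i, α i * ∑ x : {x // x ∈ P'}, h i x.1 * v x
          < ∑ i, α i * (μ * ((n:ℝ)/2)) := by
        apply Finset.sum_lt_sum
        · exact fun i _ => mul_le_mul_of_nonneg_left (hc i).le (hα0 i)
        · exact ⟨j, Finset.mem_univ j, by
            exact mul_lt_mul_of_pos_left (hc j) hj⟩
      rw [← Finset.sum_mul, hα1, one_mul] at hlt
      rw [hswap] at hsum1
      linarith
    obtain ⟨i, hi⟩ := hex
    set S := {r : ℝ | ∃ h ∈ H, r = |∑ x : {x // x ∈ P'}, h x.1 * v x|} with hS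
    have hbdd : BddAbove S := by
      refine ⟨(n:ℝ), ?_⟩
      rintro r ⟨h', hh', rfl⟩
      calc |∑ x : {x // x ∈ P'}, h' x.1 * v x|
          ≤ ∑ x : {x // x ∈ P'}, |h' x.1 * v x| := Finset.abs_sum_le_sum_abs _ _
        _ = ∑ _x : {x // x ∈ P'}, (1:ℝ) := Finset.sum_congr rfl (fun x _ => by
              rcases hH h' hh' x.1 with h1 | h1 <;> by_cases hb : σ x <;>
                simp [h1, v, hb])
        _ = (n:ℝ) := by
              rw [Finset.sum_const, nsmul_eq_mul, mul_one]
              simp [hn]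
    have hmem : |∑ x : {x // x ∈ P'}, h i x.1 * v x| ∈ S := ⟨h i, hhH i, rfl⟩
    have hsup : μ * ((n:ℝ)/2) ≤ sSup S :=
      le_trans (le_trans hi (le_abs_self _)) (le_csSup hbdd hmem)
    have : μ / 2 ≤ (1 / (n:ℝ)) * sSup S := by
      rw [div_mul_eq_mul_div, one_mul, le_div_iff₀ hNpos]
      nlinarith
    exact this
  have hcardσ : Fintype.card ({x // x ∈ P'} → Bool) = 2 ^ n := by
    simp [Fintype.card_fun, hn]
  have hbig : ((2:ℝ)^n) * (μ/2) ≤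
      ∑ σ : {x // x ∈ P'} → Bool,
        (1 / (n : ℝ)) * sSup {r : ℝ | ∃ h ∈ H,
          r = |∑ x : {x // x ∈ P'}, h x.1 * (if σ x then (1 : ℝ) else -1)|} := by
    calc ((2:ℝ)^n) * (μ/2)
        = ∑ _σ : {x // x ∈ P'} → Bool, (μ/2) := by
          rw [Finset.sum_const, nsmul_eq_mul, Finset.card_univ, hcardσ]
          push_cast; ring
      _ ≤ _ := Finset.sum_le_sum (fun σ _ => key σ)
  have h2n : (0:ℝ) < (2:ℝ)^n := by positivity
  rw [div_mul_eq_mul_div, one_mul, div_lt_iff₀ h2n] at hRad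
  nlinarith
end

section
/- Let D be a probability distribution on a type Z, let F be a set of functions Z → {0,1} (losses), and let S, S' each be m i.i.d. samples from D (viewed as empirical distributions). Denote by L_S(f), L_D(f) the empirical and true means of f. If m ≥ 2400², then Pr_S[sup_{f∈F} |L_S(f) − L_D(f)| > 1/1200] ≤ 2·Pr_{S,S'}[sup_{f∈F} |L_S(f) − L_{S'}(f)| > 1/2400]. -/
open MeasureTheory

open ProbabilityTheory Function
open scoped ENNReal

namespace Stmt9Aux

variable {Z : Type*} [MeasurableSpace Z]

lemma lt_sSup_iff_exists {R : Set ℝ} (hR : ∀ r ∈ R, r ≤ 1) {c : ℝ} (hc : 0 < c) :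
    c < sSup R ↔ ∃ r ∈ R, c < r := by
  constructor
  · intro h
    by_contra hn
    push_neg at hn
    exact absurd (Real.sSup_le hn hc.le) (not_le.2 h)
  · rintro ⟨r, hrR, hcr⟩
    exact hcr.trans_le (le_csSup ⟨1, hR⟩ hrR)

lemma pi_map_eval (D : Measure Z) [IsProbabilityMeasure D] {m : ℕ} (i : Fin m) :
    (Measure.pi fun _ : Fin m => D).map (Function.eval i) = D := by
  ext s hs
  rw [Measure.map_apply (measurable_pi_apply i) hs]
  have h1 : Function.eval i ⁻¹' s = Set.pi Set.univ (fun j => if j = i then s else Set.univ) := by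
    ext x
    simp only [Set.mem_preimage, Set.mem_pi, Set.mem_univ, forall_true_left, Function.eval]
    constructor
    · intro h j
      split_ifs with hj
      · subst hj; exact h
      · trivial
    · intro h
      simpa using h i
  rw [h1, Measure.pi_pi]
  simp [apply_ite D]

lemma iIndep_eval (D : Measure Z) [IsProbabilityMeasure D] (m : ℕ) :
    iIndepFun (fun i (S : Fin m → Z) => S i)
      (Measure.pi fun _ : Fin m => D) := by
  classical
  rw [iIndepFun_iff_measure_inter_preimage_eq_mul]
  intro s sets hsets
  have h1 : (⋂ i ∈ s, (fun (S : Fin m → Z) => S i) ⁻¹' sets i)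
      = Set.pi Set.univ (fun j => if j ∈ s then sets j else Set.univ) := by
    ext x
    simp only [Set.mem_iInter, Set.mem_preimage, Set.mem_pi, Set.mem_univ, forall_true_left]
    constructor
    · intro hx j
      split_ifs with hj
      · exact hx j hj
      · trivial
    · intro hx j hj
      have := hx j
      rwa [if_pos hj] at this
  rw [h1, Measure.pi_pi]
  have h2 : ∀ i ∈ s, (Measure.pi fun _ : Fin m => D) ((fun (S : Fin m → Z) => S i) ⁻¹' sets i)
      = D (sets i) := by
    intro i hi
    calc (Measure.pi fun _ : Fin m => D) ((fun (S : Fin m → Z) => S i) ⁻¹' sets i)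
        = ((Measure.pi fun _ : Fin m => D).map (Function.eval i)) (sets i) :=
          (Measure.map_apply (measurable_pi_apply i) (hsets i hi)).symm
      _ = D (sets i) := by rw [pi_map_eval]
  rw [Finset.prod_congr rfl h2]
  simp only [apply_ite D, measure_univ]
  rw [Finset.prod_ite_mem, Finset.univ_inter]

lemma meas_bad_le (D : Measure Z) [IsProbabilityMeasure D] {f : Z → ℝ}
    (hf01 : ∀ z, f z = 0 ∨ f z = 1) (hfm : Measurable f) {m : ℕ} (hm : 2400 ^ 2 ≤ m) :
    (Measure.pi fun _ : Fin m => D)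
      {S : Fin m → Z | 1 / 2400 < |(1 / (m : ℝ)) * ∑ i, f (S i) - ∫ z, f z ∂D|}
      ≤ 1 / 2 := by
  classical
  have hm0 : 0 < m := lt_of_lt_of_le (by norm_num) hm
  have hmR : (0 : ℝ) < m := by exact_mod_cast hm0
  have hmR' : (2400 : ℝ) ^ 2 ≤ m := by exact_mod_cast hm
  set μ := (Measure.pi fun _ : Fin m => D) with hμdef
  set X : Fin m → (Fin m → Z) → ℝ := fun i S => f (S i) with hX
  have hXm : ∀ i, Measurable (X i) := fun i => hfm.comp (measurable_pi_apply i)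
  have hfbd : ∀ z, ‖f z‖ ≤ 1 := by
    intro z
    rcases hf01 z with h | h <;> simp [h]
  have hf2 : MemLp f 2 D := MemLp.of_bound hfm.aestronglyMeasurable 1 (ae_of_all _ hfbd)
  have hX2 : ∀ i, MemLp (X i) 2 μ := fun i =>
    MemLp.of_bound (hXm i).aestronglyMeasurable 1 (ae_of_all _ fun S => hfbd (S i))
  have hid : ∀ i, IdentDistrib (X i) f μ D := by
    intro i
    refine ⟨(hXm i).aemeasurable, hfm.aemeasurable, ?_⟩
    conv_rhs => rw [← pi_map_eval D (m := m) i]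
    rw [Measure.map_map hfm (measurable_pi_apply i)]
    rfl
  have hEX : ∀ i, μ[X i] = ∫ z, f z ∂D := fun i => (hid i).integral_eq
  have hVf : variance f D ≤ 1 / 4 := by
    have hff : f ^ 2 = f := by
      funext z
      rcases hf01 z with h | h <;> simp [h]
    rw [variance_eq_sub hf2, hff]
    nlinarith [sq_nonneg (∫ z, f z ∂D - 1 / 2)]
  have hVX : ∀ i, variance (X i) μ ≤ 1 / 4 := fun i => ((hid i).variance_eq).trans_le hVf
  -- the sum
  set T : (Fin m → Z) → ℝ := ∑ i : Fin m, X i with hT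
  have hT2 : MemLp T 2 μ := memLp_finset_sum' _ fun i _ => hX2 i
  have hTvar : variance T μ ≤ (m : ℝ) / 4 := by
    have hpw : Set.Pairwise ↑(Finset.univ : Finset (Fin m))
        fun i j => IndepFun (X i) (X j) μ := by
      intro i _ j _ hij
      exact (iIndepFun.comp (iIndep_eval D m) (fun _ => f) (fun _ => hfm)).indepFun hij
    rw [hT, IndepFun.variance_sum (fun i _ => hX2 i) hpw]
    calc (∑ i : Fin m, variance (X i) μ) ≤ ∑ _i : Fin m, (1 / 4 : ℝ) :=
          Finset.sum_le_sum fun i _ => hVX i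
      _ = (m : ℝ) / 4 := by simp [Finset.sum_const]; ring
  have hTE : μ[T] = (m : ℝ) * ∫ z, f z ∂D := by
    rw [hT]
    simp only [Finset.sum_apply]
    rw [integral_finset_sum _ (fun i _ => ((hX2 i).integrable one_le_two))]
    simp [hEX, Finset.sum_const]
  have hc : (0 : ℝ) < (m : ℝ) / 2400 := by positivity
  have hcheb := meas_ge_le_variance_div_sq (μ := μ) hT2 hc
  have hsub : {S : Fin m → Z | 1 / 2400 < |(1 / (m : ℝ)) * ∑ i, f (S i) - ∫ z, f z ∂D|}
      ⊆ {S : Fin m → Z | (m : ℝ) / 2400 ≤ |T S - μ[T]|} := by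
    intro S hS
    simp only [Set.mem_setOf_eq] at hS ⊢
    have hTS : T S = ∑ i, f (S i) := by simp [hT, hX]
    rw [hTS, hTE]
    have : (∑ i, f (S i)) - (m : ℝ) * ∫ z, f z ∂D
        = (m : ℝ) * ((1 / (m : ℝ)) * ∑ i, f (S i) - ∫ z, f z ∂D) := by
      field_simp
    rw [this, abs_mul, abs_of_pos hmR]
    have := mul_le_mul_of_nonneg_left hS.le hmR.le
    calc (m : ℝ) / 2400 = (m : ℝ) * (1 / 2400) := by ring
      _ ≤ _ := mul_le_mul_of_nonneg_left hS.le hmR.le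
  have hnum : variance T μ / ((m : ℝ) / 2400) ^ 2 ≤ 1 / 2 := by
    rw [div_le_iff₀ (by positivity)]
    have h1 : ((m : ℝ) / 2400) ^ 2 = (m : ℝ) ^ 2 / 2400 ^ 2 := by ring
    nlinarith [hTvar, hmR, hmR']
  calc μ {S : Fin m → Z | 1 / 2400 < |(1 / (m : ℝ)) * ∑ i, f (S i) - ∫ z, f z ∂D|}
      ≤ μ {S : Fin m → Z | (m : ℝ) / 2400 ≤ |T S - μ[T]|} := measure_mono hsub
    _ ≤ ENNReal.ofReal (variance T μ / ((m : ℝ) / 2400) ^ 2) := hcheb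
    _ ≤ ENNReal.ofReal (1 / 2) := ENNReal.ofReal_le_ofReal hnum
    _ ≤ 1 / 2 := by
        rw [ENNReal.ofReal_div_of_pos (by norm_num)]
        simp

lemma half_le_good (D : Measure Z) [IsProbabilityMeasure D] {f : Z → ℝ}
    (hf01 : ∀ z, f z = 0 ∨ f z = 1) (hfm : Measurable f) {m : ℕ} (hm : 2400 ^ 2 ≤ m) :
    1 / 2 ≤ (Measure.pi fun _ : Fin m => D)
      {S : Fin m → Z | |(1 / (m : ℝ)) * ∑ i, f (S i) - ∫ z, f z ∂D| ≤ 1 / 2400} := by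
  have hmeasF : Measurable fun S : Fin m → Z =>
      |(1 / (m : ℝ)) * ∑ i, f (S i) - ∫ z, f z ∂D| :=
    (((measurable_const.mul
      (Finset.measurable_sum _ fun i _ => hfm.comp (measurable_pi_apply i))).sub
        measurable_const).abs)
  have hbadm : MeasurableSet
      {S : Fin m → Z | 1 / 2400 < |(1 / (m : ℝ)) * ∑ i, f (S i) - ∫ z, f z ∂D|} :=
    measurableSet_lt measurable_const hmeasF
  have hcompl : {S : Fin m → Z | |(1 / (m : ℝ)) * ∑ i, f (S i) - ∫ z, f z ∂D| ≤ 1 / 2400}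
      = {S : Fin m → Z | 1 / 2400 < |(1 / (m : ℝ)) * ∑ i, f (S i) - ∫ z, f z ∂D|}ᶜ := by
    ext S
    simp [not_lt]
  rw [hcompl, prob_compl_eq_one_sub hbadm]
  have hb := meas_bad_le D hf01 hfm hm
  calc (1 : ℝ≥0∞) / 2 = 1 - 1 / 2 := by
        rw [ENNReal.sub_half (by norm_num)]
    _ ≤ 1 - (Measure.pi fun _ : Fin m => D)
        {S : Fin m → Z | 1 / 2400 < |(1 / (m : ℝ)) * ∑ i, f (S i) - ∫ z, f z ∂D|} :=
      tsub_le_tsub_left hb 1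

end Stmt9Aux

open Stmt9Aux in
/-- Symmetrization (ghost-sample) lemma: for `m ≥ 2400²` and a class `F` of
`{0,1}`-valued losses,
`Pr_S[sup_{f∈F} |L_S(f) − L_D(f)| > 1/1200] ≤ 2 Pr_{S,S'}[sup_{f∈F} |L_S(f) − L_{S'}(f)| > 1/2400]`,
where `S, S'` are independent samples of `m` i.i.d. points from `D`. -/
theorem stmt_9 {Z : Type*} [MeasurableSpace Z]
    (D : Measure Z) [IsProbabilityMeasure D]
    (F : Set (Z → ℝ)) (hF : ∀ f ∈ F, ∀ z, f z = 0 ∨ f z = 1)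
    (hFmeas : ∀ f ∈ F, Measurable f)
    (m : ℕ) (hm : 2400 ^ 2 ≤ m) :
    (Measure.pi (fun _ : Fin m => D))
        {S : Fin m → Z | 1 / 1200 < sSup {r : ℝ | ∃ f ∈ F,
          r = |(1 / (m : ℝ)) * ∑ i, f (S i) - ∫ z, f z ∂D|}}
      ≤ 2 * ((Measure.pi (fun _ : Fin m => D)).prod (Measure.pi (fun _ : Fin m => D)))
        {p : (Fin m → Z) × (Fin m → Z) | 1 / 2400 < sSup {r : ℝ | ∃ f ∈ F,
          r = |(1 / (m : ℝ)) * ∑ i, f (p.1 i) - (1 / (m : ℝ)) * ∑ i, f (p.2 i)|}} := by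
  classical
  have hm0 : 0 < m := lt_of_lt_of_le (by norm_num) hm
  have hmR : (0 : ℝ) < m := by exact_mod_cast hm0
  set μ := Measure.pi (fun _ : Fin m => D) with hμdef
  set ν := μ.prod μ with hνdef
  -- bounds on empirical and true means
  have hbd : ∀ f ∈ F, ∀ S : Fin m → Z,
      0 ≤ (1 / (m : ℝ)) * ∑ i, f (S i) ∧ (1 / (m : ℝ)) * ∑ i, f (S i) ≤ 1 := by
    intro f hf S
    have h0 : ∀ i : Fin m, 0 ≤ f (S i) ∧ f (S i) ≤ 1 := fun i => by
      rcases hF f hf (S i) with h | h <;> simp [h]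
    have hsum0 : 0 ≤ ∑ i, f (S i) := Finset.sum_nonneg fun i _ => (h0 i).1
    have hsumm : ∑ i, f (S i) ≤ m := by
      calc ∑ i, f (S i) ≤ ∑ _i : Fin m, (1 : ℝ) := Finset.sum_le_sum fun i _ => (h0 i).2
        _ = m := by simp
    refine ⟨mul_nonneg (by positivity) hsum0, ?_⟩
    rw [one_div, inv_mul_le_iff₀ hmR, mul_one]
    exact hsumm
  have hint : ∀ f ∈ F, 0 ≤ ∫ z, f z ∂D ∧ ∫ z, f z ∂D ≤ 1 := by
    intro f hf
    have h0 : ∀ z, 0 ≤ f z ∧ f z ≤ 1 := fun z => by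
      rcases hF f hf z with h | h <;> simp [h]
    have hInt : Integrable f D := by
      refine (integrable_const (1 : ℝ)).mono' (hFmeas f hf).aestronglyMeasurable
        (ae_of_all _ fun z => ?_)
      rw [Real.norm_eq_abs, abs_le]
      exact ⟨by linarith [(h0 z).1], (h0 z).2⟩
    refine ⟨integral_nonneg fun z => (h0 z).1, ?_⟩
    calc ∫ z, f z ∂D ≤ ∫ _z, (1 : ℝ) ∂D := integral_mono hInt (integrable_const 1) fun z => (h0 z).2
      _ = 1 := by simp
  -- identify the sSup events with existential events
  have hAset : {S : Fin m → Z | 1 / 1200 < sSup {r : ℝ | ∃ f ∈ F,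
        r = |(1 / (m : ℝ)) * ∑ i, f (S i) - ∫ z, f z ∂D|}}
      = {S : Fin m → Z | ∃ f ∈ F,
        1 / 1200 < |(1 / (m : ℝ)) * ∑ i, f (S i) - ∫ z, f z ∂D|} := by
    ext S
    simp only [Set.mem_setOf_eq]
    have hRbd : ∀ r ∈ {r : ℝ | ∃ f ∈ F, r = |(1 / (m : ℝ)) * ∑ i, f (S i) - ∫ z, f z ∂D|},
        r ≤ 1 := by
      rintro r ⟨f, hf, rfl⟩
      obtain ⟨h1, h2⟩ := hbd f hf S
      obtain ⟨h3, h4⟩ := hint f hf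
      rw [abs_le]
      constructor <;> linarith
    rw [lt_sSup_iff_exists hRbd (by norm_num)]
    constructor
    · rintro ⟨r, ⟨f, hf, rfl⟩, hr⟩
      exact ⟨f, hf, hr⟩
    · rintro ⟨f, hf, hr⟩
      exact ⟨_, ⟨f, hf, rfl⟩, hr⟩
  have hBset : {p : (Fin m → Z) × (Fin m → Z) | 1 / 2400 < sSup {r : ℝ | ∃ f ∈ F,
        r = |(1 / (m : ℝ)) * ∑ i, f (p.1 i) - (1 / (m : ℝ)) * ∑ i, f (p.2 i)|}}
      = {p : (Fin m → Z) × (Fin m → Z) | ∃ f ∈ F,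
        1 / 2400 < |(1 / (m : ℝ)) * ∑ i, f (p.1 i) - (1 / (m : ℝ)) * ∑ i, f (p.2 i)|} := by
    ext p
    simp only [Set.mem_setOf_eq]
    have hRbd : ∀ r ∈ {r : ℝ | ∃ f ∈ F,
        r = |(1 / (m : ℝ)) * ∑ i, f (p.1 i) - (1 / (m : ℝ)) * ∑ i, f (p.2 i)|}, r ≤ 1 := by
      rintro r ⟨f, hf, rfl⟩
      obtain ⟨h1, h2⟩ := hbd f hf p.1
      obtain ⟨h3, h4⟩ := hbd f hf p.2
      rw [abs_le]
      constructor <;> linarith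
    rw [lt_sSup_iff_exists hRbd (by norm_num)]
    constructor
    · rintro ⟨r, ⟨f, hf, rfl⟩, hr⟩
      exact ⟨f, hf, hr⟩
    · rintro ⟨f, hf, hr⟩
      exact ⟨_, ⟨f, hf, rfl⟩, hr⟩
  rw [hAset, hBset]
  set A := {S : Fin m → Z | ∃ f ∈ F,
    1 / 1200 < |(1 / (m : ℝ)) * ∑ i, f (S i) - ∫ z, f z ∂D|} with hAdef
  set B := {p : (Fin m → Z) × (Fin m → Z) | ∃ f ∈ F,
    1 / 2400 < |(1 / (m : ℝ)) * ∑ i, f (p.1 i) - (1 / (m : ℝ)) * ∑ i, f (p.2 i)|} with hBdef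
  set U := toMeasurable ν B with hUdef
  have hUm : MeasurableSet U := measurableSet_toMeasurable ν B
  have hBU : B ⊆ U := subset_toMeasurable ν B
  -- every slice over A has measure at least 1/2
  have hslice : ∀ S ∈ A, 1 / 2 ≤ μ (Prod.mk S ⁻¹' U) := by
    intro S hS
    obtain ⟨f, hfF, hfS⟩ := hS
    refine le_trans (half_le_good D (hF f hfF) (hFmeas f hfF) hm) (measure_mono ?_)
    intro S' hS'
    simp only [Set.mem_setOf_eq] at hS'
    apply hBU
    refine ⟨f, hfF, ?_⟩
    have key : |(1 / (m : ℝ)) * ∑ i, f (S i) - ∫ z, f z ∂D|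
          - |(1 / (m : ℝ)) * ∑ i, f (S' i) - ∫ z, f z ∂D|
        ≤ |(1 / (m : ℝ)) * ∑ i, f (S i) - (1 / (m : ℝ)) * ∑ i, f (S' i)| := by
      have h := abs_sub_abs_le_abs_sub
        ((1 / (m : ℝ)) * ∑ i, f (S i) - ∫ z, f z ∂D)
        ((1 / (m : ℝ)) * ∑ i, f (S' i) - ∫ z, f z ∂D)
      have h2 : ((1 / (m : ℝ)) * ∑ i, f (S i) - ∫ z, f z ∂D)
          - ((1 / (m : ℝ)) * ∑ i, f (S' i) - ∫ z, f z ∂D)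
          = (1 / (m : ℝ)) * ∑ i, f (S i) - (1 / (m : ℝ)) * ∑ i, f (S' i) := by ring
      rwa [h2] at h
    show 1 / 2400 < |(1 / (m : ℝ)) * ∑ i, f (S i) - (1 / (m : ℝ)) * ∑ i, f (S' i)|
    linarith
  set V := {S : Fin m → Z | 1 / 2 ≤ μ (Prod.mk S ⁻¹' U)} with hVdef
  have hVm : MeasurableSet V :=
    measurableSet_le measurable_const (measurable_measure_prodMk_left hUm)
  have hAV : A ⊆ V := hslice
  have hνU : (1 / 2 : ℝ≥0∞) * μ V ≤ ν U := by
    rw [hνdef, Measure.prod_apply hUm]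
    calc (1 / 2 : ℝ≥0∞) * μ V = ∫⁻ _S in V, (1 / 2 : ℝ≥0∞) ∂μ :=
          (setLIntegral_const V (1 / 2)).symm
      _ = ∫⁻ S, V.indicator (fun _ => (1 / 2 : ℝ≥0∞)) S ∂μ :=
          (lintegral_indicator hVm _).symm
      _ ≤ ∫⁻ S, μ (Prod.mk S ⁻¹' U) ∂μ := by
          refine lintegral_mono fun S => ?_
          by_cases hSV : S ∈ V
          · rw [Set.indicator_of_mem hSV]
            exact hSV
          · simp [Set.indicator_of_notMem hSV]
  have h21 : (2 : ℝ≥0∞) * (1 / 2) = 1 := by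
    rw [one_div, ENNReal.mul_inv_cancel (by norm_num) (by norm_num)]
  calc μ A ≤ μ V := measure_mono hAV
    _ = 2 * ((1 / 2) * μ V) := by rw [← mul_assoc, h21, one_mul]
    _ ≤ 2 * ν U := mul_le_mul_right hνU 2
    _ = 2 * ν B := by rw [hUdef, measure_toMeasurable]
end
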